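/- arXiv:1206.5118 — 2 statements merged into one kernel-verified Lean document; each statement's English description precedes it below -/
import Mathlib

section
/- Let p ∈ ℂ, let γ = [[a,b],[c,d]] ∈ SL(2,ℤ), and let v : SL(2,ℤ) → ℂ∖{0} be any map. For every continuously real-differentiable function F : ℍ → ℂ one has ξ_p(F|_{v,p}γ) = (ξ_pF)|ᵃ_{v,2−p}γ on ℍ; explicitly, 2i y^p ∂_{z̄}[ v(γ)^{−1}(cz+d)^{−p}F(γz) ] = v(γ)^{−1}(cz̄+d)^{p−2}·(ξ_pF)(γz) for all z ∈ ℍ. -/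
open Complex MeasureTheory
open scoped Real

noncomputable section

/-- `SL(2,ℤ)`. -/
abbrev SL2Z := Matrix.SpecialLinearGroup (Fin 2) ℤ

/-- The upper half-plane, as a subset of `ℂ`. -/
def HSet : Set ℂ := {z : ℂ | 0 < z.im}

/-- The automorphy factor `cz + d`. -/
def jC (γ : SL2Z) (z : ℂ) : ℂ := ((γ 1 0 : ℤ) : ℂ) * z + ((γ 1 1 : ℤ) : ℂ)

/-- The Möbius action of `SL(2,ℤ)` on `ℂ` (meaningful on the upper half-plane). -/
def mact (γ : SL2Z) (z : ℂ) : ℂ := (((γ 0 0 : ℤ) : ℂ) * z + ((γ 0 1 : ℤ) : ℂ)) / jC γ z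

/-- `∂_x F`. -/
def pdX (F : ℂ → ℂ) (z : ℂ) : ℂ := fderiv ℝ F z 1

/-- `∂_y F`. -/
def pdY (F : ℂ → ℂ) (z : ℂ) : ℂ := fderiv ℝ F z Complex.I

/-- `∂_z̄ F = ½(∂_x F + i ∂_y F)`. -/
def dzbar (F : ℂ → ℂ) (z : ℂ) : ℂ := (pdX F z + Complex.I * pdY F z) / 2

/-- `∂_z F = ½(∂_x F − i ∂_y F)`. -/
def dzz (F : ℂ → ℂ) (z : ℂ) : ℂ := (pdX F z - Complex.I * pdY F z) / 2

/-- `ξ_p F = 2 i y^p ∂_z̄ F`. -/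
def xiOp (p : ℂ) (F : ℂ → ℂ) (z : ℂ) : ℂ :=
  2 * Complex.I * ((z.im : ℂ) ^ p) * dzbar F z

/-- `Δ_p F = −4 y² ∂_z ∂_z̄ F + 2 i p y ∂_z̄ F`. -/
def DeltaOp (p : ℂ) (F : ℂ → ℂ) (z : ℂ) : ℂ :=
  -4 * (z.im : ℂ) ^ 2 * dzz (fun w => dzbar F w) z + 2 * Complex.I * p * (z.im : ℂ) * dzbar F z

/-- `(conj w)^s`, computed as `conj (w ^ conj s)`; this realizes the convention
`arg (c z̄ + d) ∈ [−π, π)` for powers of `c z̄ + d`. -/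
def cpowBar (w s : ℂ) : ℂ := (starRingEnd ℂ) (w ^ ((starRingEnd ℂ) s))

/-- The holomorphic slash action `(F|_{v,p}γ)(z) = v(γ)⁻¹ (cz+d)^{−p} F(γz)`. -/
def hslash (v : SL2Z → ℂ) (p : ℂ) (γ : SL2Z) (F : ℂ → ℂ) (z : ℂ) : ℂ :=
  (v γ)⁻¹ * (jC γ z) ^ (-p) * F (mact γ z)

/-- The antiholomorphic slash action `(F|ᵃ_{v,p}γ)(z) = v(γ)⁻¹ (cz̄+d)^{−p} F(γz)`. -/
def aslash (v : SL2Z → ℂ) (p : ℂ) (γ : SL2Z) (F : ℂ → ℂ) (z : ℂ) : ℂ :=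
  (v γ)⁻¹ * cpowBar (jC γ z) (-p) * F (mact γ z)

/-- `v` is a multiplier system suitable for weight `p`. -/
def IsMultiplierSystem (v : SL2Z → ℂ) (p : ℂ) : Prop :=
  (∀ γ, v γ ≠ 0) ∧
  (∀ F : ℂ → ℂ, ∀ γ δ : SL2Z, ∀ z ∈ HSet,
    hslash v p (γ * δ) F z = hslash v p δ (hslash v p γ F) z) ∧
  (∀ F : ℂ → ℂ, ∀ z ∈ HSet, hslash v p (-1) F z = F z)

/-- `F` has at most exponential growth at the cusp (on the domain `D`). -/
def ExpGrowthOn (F : ℂ → ℂ) (D : Set ℂ) : Prop :=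
  ∃ a : ℝ, 0 < a ∧ ∀ K : Set ℝ, IsCompact K → ∃ C : ℝ, 0 < C ∧
    ∀ z ∈ D, z.re ∈ K → 1 ≤ z.im → ‖F z‖ ≤ C * Real.exp (a * z.im)

/-- The growth condition `F(z) = O(((z−ζ)/(z−ζ̄))^{−a})` as `z → ζ`. -/
def GrowthCondAt (F : ℂ → ℂ) (D : Set ℂ) (ζ : ℂ) : Prop :=
  ∃ a C δ : ℝ, 0 < a ∧ 0 < C ∧ 0 < δ ∧
    ∀ z ∈ D, z ≠ ζ → ‖z - ζ‖ < δ →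
      ‖F z‖ ≤ C * ‖(z - ζ) / (z - (starRingEnd ℂ) ζ)‖ ^ (-a)

/-- `S` is a union of finitely many (possibly zero) `SL(2,ℤ)`-orbits in the upper half-plane. -/
def IsOrbitUnion (S : Set ℂ) : Prop :=
  ∃ T : Finset ℂ, (T : Set ℂ) ⊆ HSet ∧
    S = {z : ℂ | ∃ ζ ∈ T, ∃ γ : SL2Z, z = mact γ ζ}

/-- Membership in `H^S_p(v)`: smooth, `p`-harmonic, `|_{v,p}`-invariant, of at most
exponential growth at the cusp, and satisfying the growth condition at each point of `S`. -/
def MemHS (p : ℂ) (v : SL2Z → ℂ) (S : Set ℂ) (F : ℂ → ℂ) : Prop :=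
  ContDiffOn ℝ (⊤ : ℕ∞) F (HSet \ S) ∧
  (∀ z ∈ HSet \ S, DeltaOp p F z = 0) ∧
  (∀ γ : SL2Z, ∀ z ∈ HSet \ S, hslash v p γ F z = F z) ∧
  ExpGrowthOn F (HSet \ S) ∧
  (∀ ζ ∈ S, GrowthCondAt F (HSet \ S) ζ)

/-- Membership in `M̄^S_p(v)`: antiholomorphic, `|ᵃ_{v,p}`-invariant, of at most
exponential growth at the cusp, and satisfying the growth condition at each point of `S`. -/
def MemMBarS (p : ℂ) (v : SL2Z → ℂ) (S : Set ℂ) (F : ℂ → ℂ) : Prop :=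
  DifferentiableOn ℂ (fun z => (starRingEnd ℂ) (F z)) (HSet \ S) ∧
  (∀ γ : SL2Z, ∀ z ∈ HSet \ S, aslash v p γ F z = F z) ∧
  ExpGrowthOn F (HSet \ S) ∧
  (∀ ζ ∈ S, GrowthCondAt F (HSet \ S) ζ)

/-- `σ_u(n) = ∑_{d ∣ n} d^u`, as a complex number. -/
def sigmaC (u : ℤ) (n : ℕ) : ℂ := ∑ d ∈ n.divisors, (d : ℂ) ^ u

/-- The branch `log η(z) = πiz/12 − ∑_{n≥1} σ_{−1}(n) e^{2πinz}` of the logarithm of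
the Dedekind eta function.  (The term `n = 0` of the sum vanishes.) -/
def logEta (z : ℂ) : ℂ :=
  (π : ℂ) * Complex.I * z / 12 -
    ∑' n : ℕ, sigmaC (-1) n * Complex.exp (2 * (π : ℂ) * Complex.I * (n : ℂ) * z)

/-- `η^{2r}(z) = exp(2 r log η(z))`. -/
def etaPow (r : ℂ) (z : ℂ) : ℂ := Complex.exp (2 * r * logEta z)

/-- `η̄^{−2r}(z) = exp(−2 r conj(log η(z)))`. -/
def etaBarPow (r : ℂ) (z : ℂ) : ℂ := Complex.exp (-2 * r * (starRingEnd ℂ) (logEta z))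

/-- The eta multiplier system `v_r`, defined by evaluating the transformation
behavior of `η^{2r}` at `z = i`. -/
def vr (r : ℂ) (γ : SL2Z) : ℂ :=
  etaPow r (mact γ Complex.I) / ((jC γ Complex.I) ^ r * etaPow r Complex.I)

/-- `q^α = e^{2πiαz}`. -/
def qp (α z : ℂ) : ℂ := Complex.exp (2 * (π : ℂ) * Complex.I * α * z)

/-- The incomplete Gamma function `Γ(s,w) = ∫_0^∞ (w+u)^{s−1} e^{−w−u} du`
(for `w ∉ (−∞,0]`). -/
def GammaInc (s w : ℂ) : ℂ :=
  ∫ u in Set.Ioi (0 : ℝ), (w + (u : ℂ)) ^ (s - 1) * Complex.exp (-w - (u : ℂ))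

/-- `M_p(n;y) = ∫_y^1 t^{−p} e^{nt} dt`. -/
def MFun (p n : ℂ) (y : ℝ) : ℂ := ∫ t in y..(1 : ℝ), ((t : ℂ)) ^ (-p) * Complex.exp (n * (t : ℂ))

/-- `U_M = ℂ ∖ [12M, ∞)`. -/
def UM (M : ℤ) : Set ℂ := {r : ℂ | ¬ (r.im = 0 ∧ ((12 * M : ℤ) : ℝ) ≤ r.re)}

end

noncomputable section

/-- The raising operator `E^+_p = 2iy∂_x + 2y∂_y + p`. -/
def Eplus (p : ℂ) (f : ℂ → ℂ) (z : ℂ) : ℂ :=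
  2 * Complex.I * (z.im : ℂ) * pdX f z + 2 * (z.im : ℂ) * pdY f z + p * f z

/-- The lowering operator `E^−_p = −2iy∂_x + 2y∂_y − p`. -/
def Eminus (p : ℂ) (f : ℂ → ℂ) (z : ℂ) : ℂ :=
  -2 * Complex.I * (z.im : ℂ) * pdX f z + 2 * (z.im : ℂ) * pdY f z - p * f z

/-- The Casimir operator in weight `p`: `ω_p = −y²∂_y² − y²∂_x² + ipy∂_x`. -/
def omegaOp (p : ℂ) (f : ℂ → ℂ) (z : ℂ) : ℂ :=
  -(z.im : ℂ) ^ 2 * pdY (fun w => pdY f w) z - (z.im : ℂ) ^ 2 * pdX (fun w => pdX f w) z +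
    Complex.I * p * (z.im : ℂ) * pdX f z

/-- The real-analytic slash action `(f|^{ra}_{v,p}γ)(z) = v(γ)⁻¹ e^{−ip·arg(cz+d)} f(γz)`. -/
def raslash (v : SL2Z → ℂ) (p : ℂ) (γ : SL2Z) (f : ℂ → ℂ) (z : ℂ) : ℂ :=
  (v γ)⁻¹ * Complex.exp (-Complex.I * p * ((jC γ z).arg : ℂ)) * f (mact γ z)

/-- The Fourier-expansion hypothesis on `η̄^{−2r}F`: for `Im z` sufficiently large,
`(η̄^{−2r}F)(z) = ∑_{ν ≥ μ} a_ν(r) e^{−2πi(ν−r/12)z̄}`, with each `a_ν` entire and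
`a_μ` not identically zero. -/
def FourierHyp (F : ℂ → ℂ) (S : Set ℂ) (μ : ℤ) (a : ℤ → ℂ → ℂ) : Prop :=
  (∀ ν : ℤ, Differentiable ℂ (a ν)) ∧
  (∃ r : ℂ, a μ r ≠ 0) ∧
  ∃ Y : ℝ, ∀ r : ℂ, ∀ z ∈ HSet \ S, Y < z.im →
    HasSum (fun k : ℕ =>
        a (μ + k) r *
          Complex.exp (-2 * (π : ℂ) * Complex.I * (((μ : ℂ) + (k : ℂ)) - r / 12) *
            (starRingEnd ℂ) z))
      (etaBarPow r z * F z)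

/-- Term of the first (incomplete-Gamma) sum in the normalized Fourier expansion. -/
def term1 (ℓ : ℤ) (a : ℤ → ℂ → ℂ) (r z : ℂ) (ν : ℤ) : ℂ :=
  a (-ν) r * (-4 * (π : ℂ) * ((ν : ℂ) + r / 12)) ^ ((ℓ : ℂ) + r - 1) *
    qp ((ν : ℂ) + r / 12) z *
    GammaInc (1 - (ℓ : ℂ) - r) (-4 * (π : ℂ) * ((ν : ℂ) + r / 12) * (z.im : ℂ))

/-- Term of the middle (`M_{ℓ+r}`) sum in the normalized Fourier expansion. -/
def term2 (ℓ : ℤ) (a : ℤ → ℂ → ℂ) (r z : ℂ) (ν : ℤ) : ℂ :=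
  a (-ν) r * qp ((ν : ℂ) + r / 12) z * MFun ((ℓ : ℂ) + r) (4 * (π : ℂ) * ((ν : ℂ) + r / 12)) z.im

/-- Term of the last (`b_ν`) sum in the normalized Fourier expansion. -/
def term3 (b : ℤ → ℂ → ℂ) (r z : ℂ) (ν : ℤ) : ℂ := b ν r * qp ((ν : ℂ) + r / 12) z

/-- The normalized Fourier expansion of the harmonic lift at `(r, z)`:
`val = ∑_{ν ≤ −max(M,μ)} term1 ν + ∑_{ν=1−M}^{−μ} term2 ν + ∑_{ν ≥ 1−mℓ} term3 ν`,
the infinite sums converging absolutely. -/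
def ExpandsAt (ℓ M μ mℓ : ℤ) (a b : ℤ → ℂ → ℂ) (r z : ℂ) (val : ℂ) : Prop :=
  ∃ s₁ s₃ : ℂ,
    HasSum (fun k : ℕ => term1 ℓ a r z (-(max M μ) - (k : ℤ))) s₁ ∧
    HasSum (fun k : ℕ => term3 b r z (1 - mℓ + (k : ℤ))) s₃ ∧
    val = s₁ + (∑ ν ∈ Finset.Icc (1 - M) (-μ), term2 ℓ a r z ν) + s₃

/-- The normalized harmonic lift property (i)–(iii): `h(·,z)` holomorphic on `U`,
`h(r,·) ∈ H^S_{ℓ+r}(v_r)` with `ξ_{ℓ+r} h(r,·) = η̄^{−2r}F`, and the normalized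
Fourier expansion with parameter `M` for `Im z` sufficiently large. -/
def NormalizedLiftOn (ℓ : ℤ) (S : Set ℂ) (F : ℂ → ℂ) (μ : ℤ) (a : ℤ → ℂ → ℂ)
    (mℓ M : ℤ) (U : Set ℂ) (h : ℂ → ℂ → ℂ) : Prop :=
  (∀ z ∈ HSet \ S, DifferentiableOn ℂ (fun r => h r z) U) ∧
  (∀ r ∈ U, MemHS ((ℓ : ℂ) + r) (vr r) S (h r)) ∧
  (∀ r ∈ U, ∀ z ∈ HSet \ S, xiOp ((ℓ : ℂ) + r) (h r) z = etaBarPow r z * F z) ∧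
  (∃ b : ℤ → ℂ → ℂ, (∀ ν : ℤ, 1 - mℓ ≤ ν → DifferentiableOn ℂ (b ν) U) ∧
    ∃ Y : ℝ, ∀ r ∈ U, ∀ z ∈ HSet \ S, Y < z.im → ExpandsAt ℓ M μ mℓ a b r z (h r z))

end

section AUX
lemma fderiv_apply_of_hasDerivAt {m : ℂ → ℂ} {z m' : ℂ} (hm : HasDerivAt m m' z) (v : ℂ) :
    fderiv ℝ m z v = v * m' := by
  rw [(hm.hasFDerivAt.restrictScalars ℝ).fderiv]
  simp

lemma dzbar_mul {c H : ℂ → ℂ} {z c' : ℂ} (hc : HasDerivAt c c' z)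
    (hH : DifferentiableAt ℝ H z) :
    dzbar (fun w => c w * H w) z = c z * dzbar H z := by
  have hcR : DifferentiableAt ℝ c z := hc.differentiableAt.restrictScalars ℝ
  have hx : pdX (fun w => c w * H w) z = c z * pdX H z + H z * c' := by
    unfold pdX
    rw [fderiv_fun_mul hcR hH]
    simp [fderiv_apply_of_hasDerivAt hc, smul_eq_mul]
  have hy : pdY (fun w => c w * H w) z = c z * pdY H z + H z * (Complex.I * c') := by
    unfold pdY
    rw [fderiv_fun_mul hcR hH]
    simp [fderiv_apply_of_hasDerivAt hc, smul_eq_mul]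
  unfold dzbar
  rw [hx, hy]
  linear_combination (H z * c' / 2) * Complex.I_sq

lemma dzbar_comp {F m : ℂ → ℂ} {z m' : ℂ} (hm : HasDerivAt m m' z)
    (hF : DifferentiableAt ℝ F (m z)) :
    dzbar (fun w => F (m w)) z = (starRingEnd ℂ) m' * dzbar F (m z) := by
  have hmR : DifferentiableAt ℝ m z := hm.differentiableAt.restrictScalars ℝ
  have hcomp : fderiv ℝ (fun w => F (m w)) z = (fderiv ℝ F (m z)).comp (fderiv ℝ m z) :=
    fderiv_comp (x := z) hF hmR
  set L := fderiv ℝ F (m z) with hL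
  have key : ∀ v : ℂ, L v = (v.re : ℂ) * L 1 + (v.im : ℂ) * L Complex.I := by
    intro v
    have hv : v = (v.re : ℝ) • (1:ℂ) + (v.im : ℝ) • Complex.I := by
      rw [Complex.real_smul, Complex.real_smul, mul_one, Complex.re_add_im]
    conv_lhs => rw [hv]
    rw [map_add, _root_.map_smul, _root_.map_smul, Complex.real_smul, Complex.real_smul]
  have hx : pdX (fun w => F (m w)) z = L m' := by
    unfold pdX; rw [hcomp]; simp [fderiv_apply_of_hasDerivAt hm]
  have hy : pdY (fun w => F (m w)) z = L (Complex.I * m') := by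
    unfold pdY; rw [hcomp]; simp [fderiv_apply_of_hasDerivAt hm]
  have hconj : (starRingEnd ℂ) m' = (m'.re : ℂ) - (m'.im : ℂ) * Complex.I := by
    simp [Complex.ext_iff]
  have hIm : (Complex.I * m').re = -m'.im := by simp
  have hIm2 : (Complex.I * m').im = m'.re := by simp
  unfold dzbar
  have e1 : pdX F (m z) = L 1 := rfl
  have e2 : pdY F (m z) = L Complex.I := rfl
  rw [hx, hy, key m', key (Complex.I * m'), hIm, hIm2, hconj, e1, e2]
  push_cast
  linear_combination ((m'.im : ℂ) * L Complex.I / 2) * Complex.I_sq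

lemma key_pow (p : ℂ) (j : ℂ) (hj : j ≠ 0) (y : ℝ) (hy : 0 < y) :
    (y:ℂ)^p * j^(-p) * (starRingEnd ℂ) ((j^2)⁻¹)
      = (starRingEnd ℂ) (j ^ ((starRingEnd ℂ) (p-2))) * (((y / Complex.normSq j : ℝ)):ℂ)^p := by
  have hns : (0:ℝ) < Complex.normSq j := Complex.normSq_pos.mpr hj
  have h1 : j ^ (-p) = Complex.exp (Complex.log j * (-p)) := Complex.cpow_def_of_ne_zero hj _
  have h2 : (y:ℂ)^p = Complex.exp ((Real.log y : ℂ) * p) := by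
    rw [Complex.cpow_def_of_ne_zero (by exact_mod_cast hy.ne' : (y:ℂ) ≠ 0),
      ← Complex.ofReal_log hy.le]
  have hconjj : (starRingEnd ℂ) j = Complex.exp ((starRingEnd ℂ) (Complex.log j)) := by
    rw [Complex.exp_conj]
    conv_lhs => rw [← Complex.exp_log hj]
  have h3 : (starRingEnd ℂ) ((j^2)⁻¹) = Complex.exp (-(2 * (starRingEnd ℂ) (Complex.log j))) := by
    rw [map_inv₀, map_pow, hconjj, ← Complex.exp_nat_mul, Complex.exp_neg]
    norm_num
  have h4 : (starRingEnd ℂ) (j ^ ((starRingEnd ℂ) (p-2)))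
      = Complex.exp ((p - 2) * (starRingEnd ℂ) (Complex.log j)) := by
    rw [Complex.cpow_def_of_ne_zero hj, ← Complex.exp_conj, map_mul, Complex.conj_conj, mul_comm]
  have h6 : ((Real.log (Complex.normSq j) : ℝ) : ℂ)
      = Complex.log j + (starRingEnd ℂ) (Complex.log j) := by
    have e : Real.log (Complex.normSq j) = 2 * Real.log ‖j‖ := by
      rw [Complex.normSq_eq_norm_sq, Real.log_pow]; push_cast; ring
    rw [Complex.add_conj, Complex.log_re, e]
  have h5 : (((y / Complex.normSq j : ℝ)):ℂ)^p
      = Complex.exp (((Real.log y : ℂ) - (Complex.log j + (starRingEnd ℂ) (Complex.log j))) * p) := by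
    have hpos : (0:ℝ) < y / Complex.normSq j := div_pos hy hns
    rw [Complex.cpow_def_of_ne_zero (by exact_mod_cast hpos.ne' : ((y / Complex.normSq j : ℝ):ℂ) ≠ 0),
      ← Complex.ofReal_log hpos.le, Real.log_div hy.ne' hns.ne', ← h6]
    push_cast; ring_nf
  rw [h1, h2, h3, h4, h5, ← Complex.exp_add, ← Complex.exp_add, ← Complex.exp_add]
  congr 1
  ring
lemma detC (γ : SL2Z) : ((γ 0 0 : ℤ):ℂ) * ((γ 1 1 : ℤ):ℂ) - ((γ 0 1 : ℤ):ℂ) * ((γ 1 0 : ℤ):ℂ) = 1 := by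
  have h := γ.2
  rw [Matrix.det_fin_two] at h
  exact_mod_cast h

lemma jC_ne (γ : SL2Z) {z : ℂ} (hz : 0 < z.im) : jC γ z ≠ 0 := by
  intro h
  by_cases h0 : (γ 1 0 : ℤ) = 0
  · have hd : ((γ 1 1 : ℤ):ℂ) = 0 := by simpa [jC, h0] using h
    have := detC γ
    rw [hd] at this
    simp [h0] at this
  · have : (jC γ z).im = ((γ 1 0 : ℤ):ℝ) * z.im := by simp [jC]
    rw [h] at this
    simp at this
    rcases this with h1 | h2
    · exact h0 (by exact_mod_cast h1)
    · exact hz.ne' h2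

lemma im_mact (γ : SL2Z) {z : ℂ} (hz : 0 < z.im) :
    (mact γ z).im = z.im / Complex.normSq (jC γ z) := by
  have hns : Complex.normSq (jC γ z) ≠ 0 := (Complex.normSq_pos.mpr (jC_ne γ hz)).ne'
  have hdet := detC γ
  have hdetR : ((γ 0 0 : ℤ):ℝ) * ((γ 1 1 : ℤ):ℝ) - ((γ 0 1 : ℤ):ℝ) * ((γ 1 0 : ℤ):ℝ) = 1 := by
    exact_mod_cast detC γ
  rw [mact, Complex.div_im, div_sub_div_same]
  congr 1
  simp only [jC, Complex.add_im, Complex.add_re, Complex.mul_re, Complex.mul_im,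
    Complex.intCast_re, Complex.intCast_im]
  linear_combination z.im * hdetR

lemma hasDerivAt_jC (γ : SL2Z) (z : ℂ) :
    HasDerivAt (fun w => jC γ w) ((γ 1 0 : ℤ):ℂ) z := by
  simpa [jC] using ((hasDerivAt_id z).const_mul ((γ 1 0 : ℤ):ℂ)).add_const ((γ 1 1 : ℤ):ℂ)

lemma hasDerivAt_mact (γ : SL2Z) {z : ℂ} (hz : 0 < z.im) :
    HasDerivAt (mact γ) (((jC γ z)^2)⁻¹) z := by
  have hnum : HasDerivAt (fun w => ((γ 0 0 : ℤ):ℂ) * w + ((γ 0 1 : ℤ):ℂ)) ((γ 0 0 : ℤ):ℂ) z := by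
    simpa using ((hasDerivAt_id z).const_mul ((γ 0 0 : ℤ):ℂ)).add_const ((γ 0 1 : ℤ):ℂ)
  have h := hnum.div (hasDerivAt_jC γ z) (jC_ne γ hz)
  have e : (((γ 0 0 : ℤ):ℂ) * jC γ z - (((γ 0 0 : ℤ):ℂ) * z + ((γ 0 1 : ℤ):ℂ)) * ((γ 1 0 : ℤ):ℂ))
      / (jC γ z) ^ 2 = ((jC γ z)^2)⁻¹ := by
    have e1 : ((γ 0 0 : ℤ):ℂ) * jC γ z - (((γ 0 0 : ℤ):ℂ) * z + ((γ 0 1 : ℤ):ℂ)) * ((γ 1 0 : ℤ):ℂ) = 1 := by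
      rw [jC]; linear_combination detC γ
    rw [e1, one_div]
  rw [e] at h
  exact h
end AUX

/-- The operator `ξ_p` intertwines the holomorphic action in weight `p`
with the antiholomorphic action in weight `2−p`:
`ξ_p(F|_{v,p}γ) = (ξ_pF)|ᵃ_{v,2−p}γ`, explicitly
`2iy^p ∂_z̄[v(γ)⁻¹(cz+d)^{−p}F(γz)] = v(γ)⁻¹(cz̄+d)^{p−2}(ξ_pF)(γz)`. -/
theorem xi_intertwines (p : ℂ) (γ : SL2Z) (v : SL2Z → ℂ)
    (F : ℂ → ℂ) (hF : ContDiffOn ℝ 1 F HSet) :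
    ∀ z ∈ HSet,
      xiOp p (fun w => hslash v p γ F w) z = aslash v (2 - p) γ (fun w => xiOp p F w) z ∧
      xiOp p (fun w => hslash v p γ F w) z
        = (v γ)⁻¹ * cpowBar (jC γ z) (p - 2) * xiOp p F (mact γ z) := by
  intro z hz
  have hy : 0 < z.im := hz
  have hopen : IsOpen HSet := isOpen_lt continuous_const Complex.continuous_im
  have hj : jC γ z ≠ 0 := jC_ne γ hy
  have hns : (0:ℝ) < Complex.normSq (jC γ z) := Complex.normSq_pos.mpr hj
  have hwmem : mact γ z ∈ HSet := by
    show 0 < (mact γ z).im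
    rw [im_mact γ hy]
    exact div_pos hy hns
  have hdF : DifferentiableAt ℝ F (mact γ z) :=
    (hF.differentiableOn one_ne_zero).differentiableAt (hopen.mem_nhds hwmem)
  have hm := hasDerivAt_mact γ hy
  have hmR : DifferentiableAt ℝ (mact γ) z := hm.differentiableAt.restrictScalars ℝ
  -- derivative of the prefactor
  obtain ⟨c', hc'⟩ : ∃ c', HasDerivAt (fun w => (v γ)⁻¹ * (jC γ w) ^ (-p)) c' z := by
    by_cases h0 : (γ 1 0 : ℤ) = 0
    · refine ⟨0, ?_⟩
      have e : (fun w => (v γ)⁻¹ * jC γ w ^ (-p)) = fun _ => (v γ)⁻¹ * ((γ 1 1 : ℤ):ℂ) ^ (-p) := by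
        funext w; simp [jC, h0]
      rw [e]; exact hasDerivAt_const z _
    · have hsp : jC γ z ∈ Complex.slitPlane := by
        refine Or.inr ?_
        have : (jC γ z).im = ((γ 1 0 : ℤ):ℝ) * z.im := by simp [jC]
        rw [this]
        exact mul_ne_zero (by exact_mod_cast h0) hy.ne'
      exact ⟨_, ((hasDerivAt_jC γ z).cpow_const hsp).const_mul ((v γ)⁻¹)⟩
  -- dzbar of the slash
  have hHd : DifferentiableAt ℝ (fun w => F (mact γ w)) z := hdF.comp z hmR
  have hcompb : dzbar (fun w => F (mact γ w)) z
      = (starRingEnd ℂ) (((jC γ z)^2)⁻¹) * dzbar F (mact γ z) := dzbar_comp hm hdF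
  have hmain : dzbar (fun w => hslash v p γ F w) z
      = ((v γ)⁻¹ * (jC γ z) ^ (-p)) *
        ((starRingEnd ℂ) (((jC γ z)^2)⁻¹) * dzbar F (mact γ z)) := by
    have e : (fun w => hslash v p γ F w)
        = fun w => ((v γ)⁻¹ * (jC γ w) ^ (-p)) * F (mact γ w) := rfl
    rw [e, dzbar_mul hc' hHd, hcompb]
  have hkey := key_pow p (jC γ z) hj z.im hy
  have main2 : xiOp p (fun w => hslash v p γ F w) z
      = (v γ)⁻¹ * cpowBar (jC γ z) (p - 2) * xiOp p F (mact γ z) := by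
    rw [xiOp, hmain, xiOp, im_mact γ hy, cpowBar]
    linear_combination (2 * Complex.I * (v γ)⁻¹ * dzbar F (mact γ z)) * hkey
  refine ⟨?_, main2⟩
  rw [main2, aslash]
  have : -(2 - p) = p - 2 := by ring
  rw [this]
end

section
/- Let p ∈ ℂ. For every C² function F on an open subset of ℍ: ω_p(y^{p/2}·F) = y^{p/2}·Δ_p F + (p/2)(1 − p/2)·y^{p/2}·F, where y^{p/2} = exp((p/2)·log y). In particular, if Δ_p F = 0 then y^{p/2}F is an eigenfunction of ω_p with eigenvalue ¼ − ((p−1)/2)². -/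
open Complex MeasureTheory
open scoped Real

noncomputable section OmegaAux

/-- The real-linear map `w ↦ (Im w : ℂ)`. -/
def LimCLM : ℂ →L[ℝ] ℂ := Complex.ofRealCLM.comp Complex.imCLM

lemma LimCLM_apply (v : ℂ) : LimCLM v = (v.im : ℂ) := rfl

lemma hasFDerivAt_impow (s : ℂ) {z : ℂ} (hz : 0 < z.im) :
    HasFDerivAt (fun w : ℂ => ((w.im : ℂ)) ^ s)
      ((s * ((z.im : ℂ)) ^ (s - 1)) • LimCLM) z := by
  have hmem : ((z.im : ℝ) : ℂ) ∈ Complex.slitPlane := by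
    rw [Complex.ofReal_mem_slitPlane]; exact hz
  have h1 : HasDerivAt (fun t : ℂ => t ^ s) (s * ((z.im : ℂ)) ^ (s - 1)) ((z.im : ℂ)) :=
    (Complex.hasStrictDerivAt_cpow_const hmem).hasDerivAt
  have h2 : HasFDerivAt (fun w : ℂ => (w.im : ℂ)) LimCLM z := LimCLM.hasFDerivAt
  have h3 : HasFDerivAt (fun w : ℂ => ((w.im : ℂ)) ^ s)
      (((ContinuousLinearMap.toSpanSingleton ℂ
        (s * ((z.im : ℂ)) ^ (s - 1))).restrictScalars ℝ).comp LimCLM) z :=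
    by have := (h1.hasFDerivAt.restrictScalars ℝ).comp z h2; exact this
  convert h3 using 1
  ext v
  simp [LimCLM_apply, mul_comm]

end OmegaAux

/-- `ω_p(y^{p/2}F) = y^{p/2}Δ_pF + (p/2)(1−p/2)y^{p/2}F`; in particular
if `Δ_pF = 0` then `y^{p/2}F` is an eigenfunction of `ω_p` with eigenvalue
`¼ − ((p−1)/2)²`. -/
theorem omega_of_Rh (p : ℂ) (U : Set ℂ) (hU : IsOpen U) (hUH : U ⊆ HSet)
    (F : ℂ → ℂ) (hF : ContDiffOn ℝ 2 F U) :
    (∀ z ∈ U, omegaOp p (fun w => ((w.im : ℂ) ^ (p / 2)) * F w) z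
      = ((z.im : ℂ) ^ (p / 2)) * DeltaOp p F z
        + (p / 2) * (1 - p / 2) * (((z.im : ℂ) ^ (p / 2)) * F z)) ∧
    ((∀ z ∈ U, DeltaOp p F z = 0) → ∀ z ∈ U,
      omegaOp p (fun w => ((w.im : ℂ) ^ (p / 2)) * F w) z
        = (1 / 4 - ((p - 1) / 2) ^ 2) * (((z.im : ℂ) ^ (p / 2)) * F z)) := by
  have key : ∀ z ∈ U, omegaOp p (fun w => ((w.im : ℂ) ^ (p / 2)) * F w) z
      = ((z.im : ℂ) ^ (p / 2)) * DeltaOp p F z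
        + (p / 2) * (1 - p / 2) * (((z.im : ℂ) ^ (p / 2)) * F z) := by
    intro z hz
    have hzim : 0 < z.im := hUH hz
    have hzU : U ∈ nhds z := hU.mem_nhds hz
    have hFd : ∀ w ∈ U, DifferentiableAt ℝ F w := fun w hw =>
      ((hF.contDiffAt (hU.mem_nhds hw)).differentiableAt two_ne_zero)
    have hFc2 : ContDiffAt ℝ 2 F z := hF.contDiffAt hzU
    have hA1 : ContDiffAt ℝ 1 (fderiv ℝ F) z := hFc2.fderiv_right le_rfl
    have hAd : DifferentiableAt ℝ (fderiv ℝ F) z := hA1.differentiableAt one_ne_zero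
    set B := fderiv ℝ (fderiv ℝ F) z with hBdef
    have hB : HasFDerivAt (fderiv ℝ F) B z := hAd.hasFDerivAt
    have hEv : ∀ᶠ w in nhds z, HasFDerivAt F (fderiv ℝ F w) w := by
      filter_upwards [hzU] with w hw using (hFd w hw).hasFDerivAt
    have hsym : ∀ v w : ℂ, B v w = B w v :=
      second_derivative_symmetric_of_eventually hEv hB
    -- directional derivative functions
    have hDir : ∀ v : ℂ, HasFDerivAt (fun w => fderiv ℝ F w v)
        ((ContinuousLinearMap.apply ℝ ℂ v).comp B) z :=
      fun v => ((ContinuousLinearMap.apply ℝ ℂ v).hasFDerivAt).comp z hB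
    set y : ℂ := (z.im : ℂ) with hydef
    set Hz : ℂ := y ^ (p / 2) with hHz
    set Y1 : ℂ := y ^ (p / 2 - 1) with hY1
    set Y2 : ℂ := y ^ (p / 2 - 1 - 1) with hY2
    have hyne : y ≠ 0 := by
      simp only [hydef, ne_eq, Complex.ofReal_eq_zero]; exact ne_of_gt hzim
    have hstep : ∀ s t : ℂ, s + 1 = t → y * y ^ s = y ^ t := by
      intro s t h
      rw [← h, Complex.cpow_add _ _ hyne, Complex.cpow_one, mul_comm]
    -- first derivatives of g on U
    set g : ℂ → ℂ := fun w => ((w.im : ℂ) ^ (p / 2)) * F w with hgdef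
    have hg : ∀ w ∈ U, HasFDerivAt g
        (((w.im : ℂ) ^ (p / 2)) • (fderiv ℝ F w)
          + F w • ((p / 2 * ((w.im : ℂ)) ^ (p / 2 - 1)) • LimCLM)) w :=
      fun w hw => (hasFDerivAt_impow (p / 2) (hUH hw)).mul (hFd w hw).hasFDerivAt
    have hpdXg : ∀ w ∈ U, pdX g w = ((w.im : ℂ) ^ (p / 2)) * fderiv ℝ F w 1 := by
      intro w hw
      rw [pdX, (hg w hw).fderiv]
      simp [LimCLM_apply]
    have hpdYg : ∀ w ∈ U, pdY g w
        = ((w.im : ℂ) ^ (p / 2)) * fderiv ℝ F w Complex.I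
          + F w * (p / 2 * ((w.im : ℂ)) ^ (p / 2 - 1)) := by
      intro w hw
      rw [pdY, (hg w hw).fderiv]
      simp [LimCLM_apply, smul_eq_mul]
    -- second derivative: x direction
    have eX : pdX g =ᶠ[nhds z] fun w => ((w.im : ℂ) ^ (p / 2)) * fderiv ℝ F w 1 := by
      filter_upwards [hzU] with w hw using hpdXg w hw
    have hXfun : HasFDerivAt (fun w => ((w.im : ℂ) ^ (p / 2)) * fderiv ℝ F w 1)
        (Hz • ((ContinuousLinearMap.apply ℝ ℂ (1:ℂ)).comp B)
          + (fderiv ℝ F z 1) • ((p / 2 * Y1) • LimCLM)) z :=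
      (hasFDerivAt_impow (p / 2) hzim).mul (hDir 1)
    have hXX : pdX (fun w => pdX g w) z = Hz * B 1 1 := by
      show fderiv ℝ (pdX g) z 1 = Hz * B 1 1
      rw [eX.fderiv_eq, hXfun.fderiv]
      simp [LimCLM_apply]
    -- second derivative: y direction
    have eY : pdY g =ᶠ[nhds z] fun w =>
        ((w.im : ℂ) ^ (p / 2)) * fderiv ℝ F w Complex.I
          + F w * (p / 2 * ((w.im : ℂ)) ^ (p / 2 - 1)) := by
      filter_upwards [hzU] with w hw using hpdYg w hw
    have hc2 : HasFDerivAt (fun w : ℂ => p / 2 * ((w.im : ℂ)) ^ (p / 2 - 1))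
        ((p / 2) • (((p / 2 - 1) * Y2) • LimCLM)) z :=
      (hasFDerivAt_impow (p / 2 - 1) hzim).const_mul (p / 2)
    have hYfun : HasFDerivAt (fun w =>
        ((w.im : ℂ) ^ (p / 2)) * fderiv ℝ F w Complex.I
          + F w * (p / 2 * ((w.im : ℂ)) ^ (p / 2 - 1)))
        ((Hz • ((ContinuousLinearMap.apply ℝ ℂ (Complex.I)).comp B)
          + (fderiv ℝ F z Complex.I) • ((p / 2 * Y1) • LimCLM))
         + (F z • ((p / 2) • (((p / 2 - 1) * Y2) • LimCLM))
            + (p / 2 * Y1) • (fderiv ℝ F z))) z :=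
      ((hasFDerivAt_impow (p / 2) hzim).mul (hDir Complex.I)).add
        (((hFd z hz).hasFDerivAt).mul hc2)
    have hYY : pdY (fun w => pdY g w) z
        = Hz * B Complex.I Complex.I
          + fderiv ℝ F z Complex.I * (p / 2 * Y1)
          + (F z * (p / 2 * ((p / 2 - 1) * Y2)) + p / 2 * Y1 * fderiv ℝ F z Complex.I) := by
      show fderiv ℝ (pdY g) z Complex.I = _
      rw [eY.fderiv_eq, hYfun.fderiv]
      simp [LimCLM_apply, smul_eq_mul]
    -- dzbar F and its derivatives
    have hdzb : ∀ w, dzbar F w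
        = (fderiv ℝ F w 1 + Complex.I * fderiv ℝ F w Complex.I) / 2 := fun w => rfl
    have hdzF : HasFDerivAt (dzbar F)
        ((2:ℂ)⁻¹ • (((ContinuousLinearMap.apply ℝ ℂ (1:ℂ)).comp B)
          + Complex.I • ((ContinuousLinearMap.apply ℝ ℂ (Complex.I)).comp B))) z := by
      have h1 := ((hDir 1).add (((hDir Complex.I)).const_mul Complex.I)).const_mul ((2:ℂ)⁻¹)
      have heq : dzbar F = fun w =>
          (2:ℂ)⁻¹ * (fderiv ℝ F w 1 + Complex.I * fderiv ℝ F w Complex.I) := by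
        funext w; rw [hdzb w, div_eq_inv_mul]
      rw [heq]; exact h1
    have hXdz : pdX (fun w => dzbar F w) z
        = (2:ℂ)⁻¹ * (B 1 1 + Complex.I * B 1 Complex.I) := by
      show fderiv ℝ (dzbar F) z 1 = _
      rw [hdzF.fderiv]
      simp [smul_eq_mul]
      ring
    have hYdz : pdY (fun w => dzbar F w) z
        = (2:ℂ)⁻¹ * (B Complex.I 1 + Complex.I * B Complex.I Complex.I) := by
      show fderiv ℝ (dzbar F) z Complex.I = _
      rw [hdzF.fderiv]
      simp [smul_eq_mul]
      ring
    -- put everything together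
    have hb : B 1 Complex.I = B Complex.I 1 := hsym 1 Complex.I
    have e1 : y * Y2 = Y1 := hstep _ _ (by ring)
    have e2 : y * Y1 = Hz := hstep _ _ (by ring)
    rw [omegaOp, DeltaOp, dzz, hXX, hYY, hXdz, hYdz, hdzb z]
    rw [hpdXg z hz]
    rw [hb]
    linear_combination (-(p * fderiv ℝ F z Complex.I * y)
        - (p / 2) * (p / 2 - 1) * F z) * e2
      + (-(p / 2) * (p / 2 - 1) * F z * y) * e1
      + (-(y * Hz * fderiv ℝ F z Complex.I * p)
         - y ^ 2 * Hz * B Complex.I Complex.I) * Complex.I_sq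
  refine ⟨key, fun hD z hz => ?_⟩
  rw [key z hz, hD z hz, mul_zero, zero_add]
  ring
end
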